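/- The (p,q)-exponentials e_{p,q}(z) = Σ_{n=0}^∞ p^{n(n-1)/2} z^n / ((p,q);(p,q))_n and E_{p,q}(z) = Σ_{n=0}^∞ q^{n(n-1)/2} z^n / ((p,q);(p,q))_n satisfy e_{p,q}(z) · E_{p,q}(-z) = 1, for 0 ≤ |q| < p ≤ 1 and |z| small enough that both series converge absolutely. -/

import Mathlib

/-- `((p,q);(p,q))ₙ = ∏_{j=1}^{n} (pʲ - qʲ)`. -/
def pqFact (p q : ℂ) (n : ℕ) : ℂ := ∏ j ∈ Finset.range n, (p ^ (j + 1) - q ^ (j + 1))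

/-- The `(p,q)`-exponential `e_{p,q}(z)`. -/
noncomputable def pqExpE (p q z : ℂ) : ℂ := ∑' n : ℕ, p ^ (n * (n - 1) / 2) * z ^ n / pqFact p q n

/-- The `(p,q)`-exponential `E_{p,q}(z)`. -/
noncomputable def pqExpBigE (p q z : ℂ) : ℂ := ∑' n : ℕ, q ^ (n * (n - 1) / 2) * z ^ n / pqFact p q n

/-!
Write `dₙ = pⁿ - qⁿ` and let `aₖ`, `bₗ` be the coefficients of `e_{p,q}(z)` and `E_{p,q}(-z)`.
They satisfy `aₖ₊₁ dₖ₊₁ = z pᵏ aₖ` and `bₗ₊₁ dₗ₊₁ = -z qˡ bₗ`, and `dₖ₊ₗ = dₖ pˡ + qᵏ dₗ`.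
Hence the Cauchy coefficients `cₙ = ∑_{k+l=n} aₖ bₗ` of the product satisfy
`cₙ₊₁ dₙ₊₁ = z dₙ cₙ`; since `d₀ = 0` and `dₙ ≠ 0` for `n ≥ 1` (as `|q| < p`),
all of them except `c₀ = 1` vanish.
-/

open Finset

section CauchyCoeff

variable {R : Type*} [CommRing R] {p q w : R} {A Y : ℕ → R}

theorem sum_antidiagonal_succ_mul_sub_pow
    (hA : ∀ k, A (k + 1) * (p ^ (k + 1) - q ^ (k + 1)) = w * p ^ k * A k)
    (hY : ∀ l, Y (l + 1) * (p ^ (l + 1) - q ^ (l + 1)) = -w * q ^ l * Y l) (n : ℕ) :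
    (∑ x ∈ antidiagonal (n + 1), A x.1 * Y x.2) * (p ^ (n + 1) - q ^ (n + 1)) =
      w * (p ^ n - q ^ n) * ∑ x ∈ antidiagonal n, A x.1 * Y x.2 := by
  have hsplit : ∀ x ∈ antidiagonal (n + 1), A x.1 * Y x.2 * (p ^ (n + 1) - q ^ (n + 1)) =
      A x.1 * (p ^ x.1 - q ^ x.1) * (p ^ x.2 * Y x.2) +
        q ^ x.1 * A x.1 * (Y x.2 * (p ^ x.2 - q ^ x.2)) := by
    intro x hx
    rw [← mem_antidiagonal.mp hx, pow_add, pow_add]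
    ring
  rw [sum_mul, sum_congr rfl hsplit, sum_add_distrib, Nat.sum_antidiagonal_succ,
    Nat.sum_antidiagonal_succ']
  simp only [hA, hY, pow_zero, sub_self, mul_zero, zero_mul, zero_add, mul_sum, ← sum_add_distrib]
  refine sum_congr rfl fun x hx => ?_
  rw [← mem_antidiagonal.mp hx, pow_add, pow_add]
  ring

theorem sum_antidiagonal_succ_eq_zero [NoZeroDivisors R]
    (hd : ∀ n, p ^ (n + 1) - q ^ (n + 1) ≠ 0)
    (hA : ∀ k, A (k + 1) * (p ^ (k + 1) - q ^ (k + 1)) = w * p ^ k * A k)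
    (hY : ∀ l, Y (l + 1) * (p ^ (l + 1) - q ^ (l + 1)) = -w * q ^ l * Y l) (n : ℕ) :
    ∑ x ∈ antidiagonal (n + 1), A x.1 * Y x.2 = 0 := by
  induction n with
  | zero =>
    refine (mul_eq_zero.mp ?_).resolve_right (hd 0)
    rw [sum_antidiagonal_succ_mul_sub_pow hA hY]
    simp
  | succ n ih =>
    refine (mul_eq_zero.mp ?_).resolve_right (hd (n + 1))
    rw [sum_antidiagonal_succ_mul_sub_pow hA hY, ih, mul_zero]

end CauchyCoeff

theorem norm_pow_mul_sub_le_norm_pow_succ_sub {𝕜 : Type*} [NormedDivisionRing 𝕜] {x y : 𝕜}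
    (h : ‖y‖ ≤ ‖x‖) (n : ℕ) :
    ‖x‖ ^ n * (‖x‖ - ‖y‖) ≤ ‖x ^ (n + 1) - y ^ (n + 1)‖ := by
  have hyn : ‖y‖ ^ n * ‖y‖ ≤ ‖x‖ ^ n * ‖y‖ :=
    mul_le_mul_of_nonneg_right (pow_le_pow_left₀ (norm_nonneg y) h n) (norm_nonneg y)
  calc ‖x‖ ^ n * (‖x‖ - ‖y‖) ≤ ‖x ^ (n + 1)‖ - ‖y ^ (n + 1)‖ := by
        rw [norm_pow, norm_pow, pow_succ, pow_succ]
        linarith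
    _ ≤ ‖x ^ (n + 1) - y ^ (n + 1)‖ := norm_sub_norm_le _ _

theorem pow_succ_sub_pow_succ_ne_zero {𝕜 : Type*} [NormedDivisionRing 𝕜] {x y : 𝕜}
    (h : ‖y‖ < ‖x‖) (n : ℕ) : x ^ (n + 1) - y ^ (n + 1) ≠ 0 := by
  have hx : 0 < ‖x‖ := (norm_nonneg y).trans_lt h
  refine norm_pos_iff.mp (lt_of_lt_of_le ?_ (norm_pow_mul_sub_le_norm_pow_succ_sub h.le n))
  exact mul_pos (pow_pos hx n) (sub_pos.mpr h)

theorem pqFact_succ (x y : ℂ) (n : ℕ) :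
    pqFact x y (n + 1) = pqFact x y n * (x ^ (n + 1) - y ^ (n + 1)) :=
  prod_range_succ _ n

theorem pow_mul_sub_pow_le_norm_pqFact {x y : ℂ} (h : ‖y‖ ≤ ‖x‖) (n : ℕ) :
    ‖x‖ ^ (n * (n - 1) / 2) * (‖x‖ - ‖y‖) ^ n ≤ ‖pqFact x y n‖ := by
  calc ‖x‖ ^ (n * (n - 1) / 2) * (‖x‖ - ‖y‖) ^ n
      = ∏ j ∈ range n, ‖x‖ ^ j * (‖x‖ - ‖y‖) := by
        rw [prod_mul_distrib, prod_pow_eq_pow_sum, sum_range_id, prod_const, card_range]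
    _ ≤ ∏ j ∈ range n, ‖x ^ (j + 1) - y ^ (j + 1)‖ :=
        prod_le_prod (fun j _ => mul_nonneg (by positivity) (sub_nonneg.mpr h))
          (fun j _ => norm_pow_mul_sub_le_norm_pow_succ_sub h j)
    _ = ‖pqFact x y n‖ := by rw [pqFact, norm_prod]

/-- `c = x` gives the terms of `e_{x,y}`, `c = y` those of `E_{x,y}`. -/
noncomputable def pqExpTerm (c x y z : ℂ) (n : ℕ) : ℂ :=
  c ^ (n * (n - 1) / 2) * z ^ n / pqFact x y n

theorem pqExpTerm_succ_mul {c x y : ℂ} (z : ℂ) {n : ℕ} (h : x ^ (n + 1) - y ^ (n + 1) ≠ 0) :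
    pqExpTerm c x y z (n + 1) * (x ^ (n + 1) - y ^ (n + 1)) = z * c ^ n * pqExpTerm c x y z n := by
  have hexp : (n + 1) * (n + 1 - 1) / 2 = n + n * (n - 1) / 2 := by
    rw [← Nat.choose_two_right, ← Nat.choose_two_right, Nat.choose_succ_succ',
      Nat.choose_one_right]
  rw [pqExpTerm, pqExpTerm, pqFact_succ, hexp, pow_add, pow_succ, ← div_div,
    div_mul_cancel₀ _ h]
  ring

theorem norm_pqExpTerm_le {c x y : ℂ} (z : ℂ) (hc : ‖c‖ ≤ ‖x‖) (hy : ‖y‖ < ‖x‖) (n : ℕ) :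
    ‖pqExpTerm c x y z n‖ ≤ (‖z‖ / (‖x‖ - ‖y‖)) ^ n := by
  have hx : 0 < ‖x‖ := (norm_nonneg y).trans_lt hy
  have hxy : 0 < ‖x‖ - ‖y‖ := sub_pos.mpr hy
  rw [pqExpTerm, norm_div, norm_mul, norm_pow, norm_pow, div_pow]
  calc ‖c‖ ^ (n * (n - 1) / 2) * ‖z‖ ^ n / ‖pqFact x y n‖
      ≤ ‖x‖ ^ (n * (n - 1) / 2) * ‖z‖ ^ n / (‖x‖ ^ (n * (n - 1) / 2) * (‖x‖ - ‖y‖) ^ n) :=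
        div_le_div₀ (by positivity) (by gcongr) (by positivity)
          (pow_mul_sub_pow_le_norm_pqFact hy.le n)
    _ = ‖z‖ ^ n / (‖x‖ - ‖y‖) ^ n := by
        rw [mul_div_mul_left _ _ (by positivity : ‖x‖ ^ (n * (n - 1) / 2) ≠ 0)]

theorem summable_norm_pqExpTerm {c x y z : ℂ} (hc : ‖c‖ ≤ ‖x‖) (hy : ‖y‖ < ‖x‖)
    (hz : ‖z‖ < ‖x‖ - ‖y‖) : Summable fun n => ‖pqExpTerm c x y z n‖ := by
  have hxy : 0 < ‖x‖ - ‖y‖ := sub_pos.mpr hy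
  refine Summable.of_nonneg_of_le (fun n => norm_nonneg _) (norm_pqExpTerm_le z hc hy)
    (summable_geometric_of_lt_one (by positivity) ?_)
  rwa [div_lt_one hxy]

theorem pqExp_mul_eq_one_general (p : ℝ) (q : ℂ) (hq : ‖q‖ < p) :
    ∃ ε > 0, ∀ z : ℂ, ‖z‖ < ε →
      pqExpE (p : ℂ) q z * pqExpBigE (p : ℂ) q (-z) = 1 := by
  have hp : ‖(p : ℂ)‖ = p := by
    rw [Complex.norm_real, Real.norm_of_nonneg ((norm_nonneg q).trans hq.le)]
  have hqp : ‖q‖ < ‖(p : ℂ)‖ := by rwa [hp]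
  have hd := pow_succ_sub_pow_succ_ne_zero hqp
  refine ⟨p - ‖q‖, sub_pos.mpr hq, fun z hz => ?_⟩
  rw [← hp] at hz
  have he := summable_norm_pqExpTerm le_rfl hqp hz
  have hE := summable_norm_pqExpTerm hqp.le hqp (by rwa [norm_neg])
  change (∑' n, pqExpTerm p p q z n) * ∑' n, pqExpTerm q p q (-z) n = 1
  rw [tsum_mul_tsum_eq_tsum_sum_antidiagonal_of_summable_norm he hE, tsum_eq_single 0]
  · simp [pqExpTerm, pqFact]
  · intro n hn
    obtain ⟨m, rfl⟩ := Nat.exists_eq_succ_of_ne_zero hn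
    exact sum_antidiagonal_succ_eq_zero hd (fun k => pqExpTerm_succ_mul z (hd k))
      (fun l => pqExpTerm_succ_mul (-z) (hd l)) m

theorem pqExp_mul_eq_one (p : ℝ) (q : ℂ) (hq : ‖q‖ < p) (hp : p ≤ 1) :
    ∃ ε > 0, ∀ z : ℂ, ‖z‖ < ε →
      pqExpE (p : ℂ) q z * pqExpBigE (p : ℂ) q (-z) = 1 :=
  pqExp_mul_eq_one_general p q hq
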